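/- arXiv:1303.2956 — 4 statements merged into one kernel-verified Lean document; each statement's English description precedes it below -/
import Mathlib

section
/- Let γ(u,t) be a one-parameter family of smooth partially null curves in E⁴₁ with speed v = ‖∂γ/∂u‖ and partially null Frenet frame {T, N, B₁, B₂} with curvatures k₁, k₂ (and k₃ = 0), whose flow is ∂γ/∂t = β₁T + β₂N + β₃B₁ + β₄B₂. Then the speed evolves by ∂v/∂t = ∂β₁/∂u − β₂ k₁ v. -/
/-!
Since `∂γ/∂u = v T` with `⟨T,T⟩ = 1`, the speed is `v = ⟨∂γ/∂u, T⟩`. Differentiating in `t`, the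
term `⟨∂γ/∂u, ∂T/∂t⟩ = v ⟨T, ∂T/∂t⟩` vanishes, and the mixed partials of `γ` commute, so
`∂v/∂t = ⟨∂/∂u (∂γ/∂t), T⟩ = ∂/∂u ⟨∂γ/∂t, T⟩ - ⟨∂γ/∂t, ∂T/∂u⟩`. Reading off the frame coefficients,
`⟨∂γ/∂t, T⟩ = β₁` and, by `∂T/∂u = v k₁ N`, `⟨∂γ/∂t, ∂T/∂u⟩ = v k₁ β₂`.
-/

noncomputable section

/-- The Minkowski bilinear form on `ℝ⁴` with signature `(-,+,+,+)`. -/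
def mink (v w : Fin 4 → ℝ) : ℝ :=
  -(v 0 * w 0) + v 1 * w 1 + v 2 * w 2 + v 3 * w 3

/-- The Minkowski norm `‖v‖ = √|⟨v,v⟩|`. -/
def mnorm (v : Fin 4 → ℝ) : ℝ := Real.sqrt |mink v v|

section Minkowski

theorem mink_comm (a b : Fin 4 → ℝ) : mink a b = mink b a := by
  simp only [mink]; ring

theorem mink_add_left (a b c : Fin 4 → ℝ) : mink (a + b) c = mink a c + mink b c := by
  simp only [mink, Pi.add_apply]; ring

theorem mink_smul_left (r : ℝ) (a b : Fin 4 → ℝ) : mink (r • a) b = r * mink a b := by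
  simp only [mink, Pi.smul_apply, smul_eq_mul]; ring

theorem mink_smul_right (r : ℝ) (a b : Fin 4 → ℝ) : mink a (r • b) = r * mink a b := by
  rw [mink_comm, mink_smul_left, mink_comm]

variable {T N B₁ B₂ : Fin 4 → ℝ}

theorem mink_frame_combination_first (hTT : mink T T = 1) (hTN : mink T N = 0)
    (hTB₁ : mink T B₁ = 0) (hTB₂ : mink T B₂ = 0) (a b c d : ℝ) :
    mink (a • T + b • N + c • B₁ + d • B₂) T = a := by
  simp only [mink_add_left, mink_smul_left, hTT, mink_comm N T, mink_comm B₁ T, mink_comm B₂ T,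
    hTN, hTB₁, hTB₂]
  ring

theorem mink_frame_combination_second (hNN : mink N N = 1) (hTN : mink T N = 0)
    (hNB₁ : mink N B₁ = 0) (hNB₂ : mink N B₂ = 0) (a b c d : ℝ) :
    mink (a • T + b • N + c • B₁ + d • B₂) N = b := by
  simp only [mink_add_left, mink_smul_left, hNN, hTN, mink_comm B₁ N, mink_comm B₂ N, hNB₁,
    hNB₂]
  ring

theorem HasDerivAt.mink {f g : ℝ → Fin 4 → ℝ} {f' g' : Fin 4 → ℝ} {x : ℝ}
    (hf : HasDerivAt f f' x) (hg : HasDerivAt g g' x) :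
    HasDerivAt (fun y => mink (f y) (g y)) (mink f' (g x) + mink (f x) g') x := by
  have hf := hasDerivAt_pi.1 hf
  have hg := hasDerivAt_pi.1 hg
  exact ((((hf 0).fun_mul (hg 0)).fun_neg.fun_add ((hf 1).fun_mul (hg 1))).fun_add
    ((hf 2).fun_mul (hg 2))).fun_add ((hf 3).fun_mul (hg 3))
    |>.congr_deriv (by simp only [_root_.mink]; ring)

theorem mink_self_hasDerivAt_eq_zero {f : ℝ → Fin 4 → ℝ} {f' : Fin 4 → ℝ} {x c : ℝ}
    (hf : HasDerivAt f f' x) (hc : ∀ y, mink (f y) (f y) = c) : mink (f x) f' = 0 := by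
  have h := (hf.mink hf).unique (by simpa only [hc] using hasDerivAt_const x c)
  rw [mink_comm f'] at h
  linarith

end Minkowski

section MixedPartials

variable {E : Type*} [NormedAddCommGroup E] [NormedSpace ℝ E] {F : ℝ × ℝ → E}

theorem hasDerivAt_fst_of_differentiableAt {u t : ℝ} (hF : DifferentiableAt ℝ F (u, t)) :
    HasDerivAt (fun x => F (x, t)) (fderiv ℝ F (u, t) (1, 0)) u :=
  hF.hasFDerivAt.comp_hasDerivAt_of_eq u ((hasDerivAt_id u).prodMk (hasDerivAt_const u t)) rfl

theorem hasDerivAt_snd_of_differentiableAt {u t : ℝ} (hF : DifferentiableAt ℝ F (u, t)) :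
    HasDerivAt (fun x => F (u, x)) (fderiv ℝ F (u, t) (0, 1)) t :=
  hF.hasFDerivAt.comp_hasDerivAt_of_eq t ((hasDerivAt_const t u).prodMk (hasDerivAt_id t)) rfl

theorem hasDerivAt_deriv_snd (hF : ContDiff ℝ 2 F) (u t : ℝ) :
    HasDerivAt (fun y => deriv (fun x => F (y, x)) t)
      (fderiv ℝ (fderiv ℝ F) (u, t) (1, 0) (0, 1)) u := by
  have hFd : Differentiable ℝ F := hF.differentiable (by norm_num)
  have hGd : Differentiable ℝ (fderiv ℝ F) :=
    (hF.fderiv_right (m := 1) le_rfl).differentiable one_ne_zero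
  have h : (fun y => deriv (fun x => F (y, x)) t) = fun y => fderiv ℝ F (y, t) (0, 1) :=
    funext fun y => (hasDerivAt_snd_of_differentiableAt (hFd (y, t))).deriv
  rw [h]
  exact (ContinuousLinearMap.apply ℝ E ((0 : ℝ), (1 : ℝ))).hasFDerivAt.comp_hasDerivAt u
    (hasDerivAt_fst_of_differentiableAt (hGd (u, t)))

/-- Clairaut: the derivative is the same mixed second derivative as in `hasDerivAt_deriv_snd`. -/
theorem hasDerivAt_deriv_fst (hF : ContDiff ℝ 2 F) (u t : ℝ) :
    HasDerivAt (fun x => deriv (fun y => F (y, x)) u)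
      (fderiv ℝ (fderiv ℝ F) (u, t) (1, 0) (0, 1)) t := by
  have hFd : Differentiable ℝ F := hF.differentiable (by norm_num)
  have hGd : Differentiable ℝ (fderiv ℝ F) :=
    (hF.fderiv_right (m := 1) le_rfl).differentiable one_ne_zero
  have h : (fun x => deriv (fun y => F (y, x)) u) = fun x => fderiv ℝ F (u, x) (1, 0) :=
    funext fun x => (hasDerivAt_fst_of_differentiableAt (hFd (u, x))).deriv
  rw [h, (hF.contDiffAt.isSymmSndFDerivAt (by simp)) (1, 0) (0, 1)]
  exact (ContinuousLinearMap.apply ℝ E ((1 : ℝ), (0 : ℝ))).hasFDerivAt.comp_hasDerivAt t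
    (hasDerivAt_snd_of_differentiableAt (hGd (u, t)))

end MixedPartials

theorem speed_evolution_partially_null_general
    (γ T N B₁ B₂ : ℝ → ℝ → (Fin 4 → ℝ))
    (v k₁ β₁ β₂ β₃ β₄ : ℝ → ℝ → ℝ)
    (hγsmooth : ContDiff ℝ (⊤ : ℕ∞) (fun p : ℝ × ℝ => γ p.1 p.2))
    (hTsmooth : ContDiff ℝ (⊤ : ℕ∞) (fun p : ℝ × ℝ => T p.1 p.2))
    (hTT : ∀ u t : ℝ, mink (T u t) (T u t) = 1)
    (hNN : ∀ u t : ℝ, mink (N u t) (N u t) = 1)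
    (hTN : ∀ u t : ℝ, mink (T u t) (N u t) = 0)
    (hTB₁ : ∀ u t : ℝ, mink (T u t) (B₁ u t) = 0)
    (hTB₂ : ∀ u t : ℝ, mink (T u t) (B₂ u t) = 0)
    (hNB₁ : ∀ u t : ℝ, mink (N u t) (B₁ u t) = 0)
    (hNB₂ : ∀ u t : ℝ, mink (N u t) (B₂ u t) = 0)
    -- speed, tangent and Frenet equations (∂/∂s = (1/v)∂/∂u, k₃ = 0)
    (hT : ∀ u t : ℝ, deriv (fun x => γ x t) u = v u t • T u t)
    (hfr₁ : ∀ u t : ℝ, deriv (fun x => T x t) u = (v u t * k₁ u t) • N u t)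
    (hflow : ∀ u t : ℝ, deriv (fun x => γ u x) t =
      β₁ u t • T u t + β₂ u t • N u t + β₃ u t • B₁ u t + β₄ u t • B₂ u t) :
    ∀ u t : ℝ, deriv (fun x => v u x) t =
      deriv (fun x => β₁ x t) u - β₂ u t * k₁ u t * v u t := by
  intro u t
  have hγ : ContDiff ℝ 2 (fun p : ℝ × ℝ => γ p.1 p.2) :=
    hγsmooth.of_le (WithTop.coe_le_coe.2 le_top)
  have hTd : Differentiable ℝ (fun p : ℝ × ℝ => T p.1 p.2) :=
    hTsmooth.differentiable (by simp)
  have hTt : HasDerivAt (fun x => T u x) _ t := hasDerivAt_snd_of_differentiableAt (hTd (u, t))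
  have hTu : HasDerivAt (fun y => T y t) ((v u t * k₁ u t) • N u t) u := by
    have h := hasDerivAt_fst_of_differentiableAt (hTd (u, t))
    rwa [← h.deriv, hfr₁] at h
  have hspeed : (fun x => v u x) = fun x => mink (deriv (fun y => γ y x) u) (T u x) :=
    funext fun x => by rw [hT, mink_smul_left, hTT, mul_one]
  have hβ₁ : (fun y => β₁ y t) = fun y => mink (deriv (fun x => γ y x) t) (T y t) :=
    funext fun y => by
      rw [hflow, mink_frame_combination_first (hTT y t) (hTN y t) (hTB₁ y t) (hTB₂ y t)]
  have hvt := (hasDerivAt_deriv_fst hγ u t).mink hTt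
  rw [← hspeed, hT, mink_smul_left, mink_self_hasDerivAt_eq_zero hTt (hTT u), mul_zero,
    add_zero] at hvt
  have hβ₁u := (hasDerivAt_deriv_snd hγ u t).mink hTu
  rw [← hβ₁, mink_smul_right, hflow,
    mink_frame_combination_second (hNN u t) (hTN u t) (hNB₁ u t) (hNB₂ u t)] at hβ₁u
  rw [hvt.deriv, hβ₁u.deriv]
  ring

theorem speed_evolution_partially_null
    (γ T N B₁ B₂ : ℝ → ℝ → (Fin 4 → ℝ))
    (v k₁ k₂ β₁ β₂ β₃ β₄ : ℝ → ℝ → ℝ)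
    (hγsmooth : ContDiff ℝ (⊤ : ℕ∞) (fun p : ℝ × ℝ => γ p.1 p.2))
    (hTsmooth : ContDiff ℝ (⊤ : ℕ∞) (fun p : ℝ × ℝ => T p.1 p.2))
    (hNsmooth : ContDiff ℝ (⊤ : ℕ∞) (fun p : ℝ × ℝ => N p.1 p.2))
    (hB₁smooth : ContDiff ℝ (⊤ : ℕ∞) (fun p : ℝ × ℝ => B₁ p.1 p.2))
    (hB₂smooth : ContDiff ℝ (⊤ : ℕ∞) (fun p : ℝ × ℝ => B₂ p.1 p.2))
    (hk₁smooth : ContDiff ℝ (⊤ : ℕ∞) (fun p : ℝ × ℝ => k₁ p.1 p.2))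
    (hk₂smooth : ContDiff ℝ (⊤ : ℕ∞) (fun p : ℝ × ℝ => k₂ p.1 p.2))
    (hβ₁smooth : ContDiff ℝ (⊤ : ℕ∞) (fun p : ℝ × ℝ => β₁ p.1 p.2))
    (hβ₂smooth : ContDiff ℝ (⊤ : ℕ∞) (fun p : ℝ × ℝ => β₂ p.1 p.2))
    (hβ₃smooth : ContDiff ℝ (⊤ : ℕ∞) (fun p : ℝ × ℝ => β₃ p.1 p.2))
    (hβ₄smooth : ContDiff ℝ (⊤ : ℕ∞) (fun p : ℝ × ℝ => β₄ p.1 p.2))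
    (hTT : ∀ u t : ℝ, mink (T u t) (T u t) = 1)
    (hNN : ∀ u t : ℝ, mink (N u t) (N u t) = 1)
    (hB₁B₁ : ∀ u t : ℝ, mink (B₁ u t) (B₁ u t) = 0)
    (hB₂B₂ : ∀ u t : ℝ, mink (B₂ u t) (B₂ u t) = 0)
    (hB₁B₂ : ∀ u t : ℝ, mink (B₁ u t) (B₂ u t) = 1)
    (hTN : ∀ u t : ℝ, mink (T u t) (N u t) = 0)
    (hTB₁ : ∀ u t : ℝ, mink (T u t) (B₁ u t) = 0)
    (hTB₂ : ∀ u t : ℝ, mink (T u t) (B₂ u t) = 0)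
    (hNB₁ : ∀ u t : ℝ, mink (N u t) (B₁ u t) = 0)
    (hNB₂ : ∀ u t : ℝ, mink (N u t) (B₂ u t) = 0)
    -- speed, tangent and Frenet equations (∂/∂s = (1/v)∂/∂u, k₃ = 0)
    (hv : ∀ u t : ℝ, v u t = mnorm (deriv (fun x => γ x t) u))
    (hvpos : ∀ u t : ℝ, 0 < v u t)
    (hT : ∀ u t : ℝ, deriv (fun x => γ x t) u = v u t • T u t)
    (hfr₁ : ∀ u t : ℝ, deriv (fun x => T x t) u = (v u t * k₁ u t) • N u t)
    (hfr₂ : ∀ u t : ℝ, deriv (fun x => N x t) u =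
      (v u t * -(k₁ u t)) • T u t + (v u t * k₂ u t) • B₁ u t)
    (hfr₃ : ∀ u t : ℝ, deriv (fun x => B₁ x t) u = 0)
    (hfr₄ : ∀ u t : ℝ, deriv (fun x => B₂ x t) u = (v u t * -(k₂ u t)) • N u t)
    (hflow : ∀ u t : ℝ, deriv (fun x => γ u x) t =
      β₁ u t • T u t + β₂ u t • N u t + β₃ u t • B₁ u t + β₄ u t • B₂ u t) :
    ∀ u t : ℝ, deriv (fun x => v u x) t =
      deriv (fun x => β₁ x t) u - β₂ u t * k₁ u t * v u t :=
  speed_evolution_partially_null_general γ T N B₁ B₂ v k₁ β₁ β₂ β₃ β₄ hγsmooth hTsmooth hTT hNN hTN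
    hTB₁ hTB₂ hNB₁ hNB₂ hT hfr₁ hflow
end
end

section
/- Let γ(s,t) be an arclength-parametrized inextensible flow of partially null curves in E⁴₁ with partially null Frenet frame {T, N, B₁, B₂}, curvatures k₁, k₂ (k₃ = 0), and flow ∂γ/∂t = β₁T + β₂N + β₃B₁ + β₄B₂ (so that ∂β₁/∂s = β₂k₁). Then the tangent evolves by ∂T/∂t = (∂β₂/∂s + β₁k₁ − β₄k₂) N + (∂β₃/∂s + β₂k₂) B₁ + (∂β₄/∂s) B₂. -/
/-!
Formalization of inextensible flows of partially null / pseudo null curves in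
Minkowski space-time `E⁴₁` (ℝ⁴ with signature (-,+,+,+)).
-/

noncomputable section

/-!
Since `T = ∂γ/∂s` and `γ` is `C²`, the second partial derivatives of `γ` commute, so
`∂T/∂t = ∂/∂s (∂γ/∂t) = ∂/∂s (β₁T + β₂N + β₃B₁ + β₄B₂)`; expanding the right-hand side with the
Frenet equations and `∂β₁/∂s = β₂k₁` makes the `T`-components cancel.
-/

open Function

section PartialDerivatives

variable {V : Type*} [NormedAddCommGroup V] [NormedSpace ℝ V] {f : ℝ → ℝ → V}

theorem hasDerivAt_partial_fst {s t : ℝ} (hf : DifferentiableAt ℝ (uncurry f) (s, t)) :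
    HasDerivAt (fun x => f x t) (fderiv ℝ (uncurry f) (s, t) (1, 0)) s :=
  (hf.hasFDerivAt.comp_hasDerivAt s ((hasDerivAt_id s).prodMk (hasDerivAt_const s t)) :)

theorem hasDerivAt_partial_snd {s t : ℝ} (hf : DifferentiableAt ℝ (uncurry f) (s, t)) :
    HasDerivAt (fun y => f s y) (fderiv ℝ (uncurry f) (s, t) (0, 1)) t :=
  (hf.hasFDerivAt.comp_hasDerivAt t ((hasDerivAt_const t s).prodMk (hasDerivAt_id t)) :)

theorem differentiable_partial_fst (hf : Differentiable ℝ (uncurry f)) (t : ℝ) :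
    Differentiable ℝ (fun x => f x t) :=
  fun s => (hasDerivAt_partial_fst (hf (s, t))).differentiableAt

theorem differentiable_fderiv_apply (hf : ContDiff ℝ 2 (uncurry f)) (v : ℝ × ℝ) :
    Differentiable ℝ (fun p => fderiv ℝ (uncurry f) p v) :=
  ((hf.fderiv_right (m := 1) le_rfl).differentiable one_ne_zero).clm_apply
    (differentiable_const v)

theorem fderiv_fderiv_apply (hf : ContDiff ℝ 2 (uncurry f)) (p v w : ℝ × ℝ) :
    fderiv ℝ (fun q => fderiv ℝ (uncurry f) q v) p w = fderiv ℝ (fderiv ℝ (uncurry f)) p w v := by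
  rw [fderiv_clm_apply ((hf.fderiv_right (m := 1) le_rfl).differentiable one_ne_zero p)
    (differentiableAt_const v)]
  simp

theorem differentiable_deriv_partial_fst (hf : ContDiff ℝ 2 (uncurry f)) (t : ℝ) :
    Differentiable ℝ (fun x => deriv (fun y => f y t) x) := by
  have hdiff := hf.differentiable two_ne_zero
  simp_rw [fun x => (hasDerivAt_partial_fst (hdiff (x, t))).deriv]
  exact differentiable_partial_fst (f := fun x y => fderiv ℝ (uncurry f) (x, y) (1, 0))
    (differentiable_fderiv_apply hf (1, 0)) t

theorem deriv_partial_comm (hf : ContDiff ℝ 2 (uncurry f)) (s t : ℝ) :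
    deriv (fun y => deriv (fun x => f x y) s) t = deriv (fun x => deriv (fun y => f x y) t) s := by
  have hdiff := hf.differentiable two_ne_zero
  have hsymm : IsSymmSndFDerivAt ℝ (uncurry f) (s, t) :=
    hf.contDiffAt.isSymmSndFDerivAt (by simp)
  simp_rw [fun x y => (hasDerivAt_partial_fst (hdiff (x, y))).deriv,
    fun x y => (hasDerivAt_partial_snd (hdiff (x, y))).deriv]
  calc deriv (fun y => fderiv ℝ (uncurry f) (s, y) (1, 0)) t
      = fderiv ℝ (fun q => fderiv ℝ (uncurry f) q (1, 0)) (s, t) (0, 1) :=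
        (hasDerivAt_partial_snd (f := fun x y => fderiv ℝ (uncurry f) (x, y) (1, 0))
          (differentiable_fderiv_apply hf (1, 0) (s, t))).deriv
    _ = fderiv ℝ (fderiv ℝ (uncurry f)) (s, t) (0, 1) (1, 0) := fderiv_fderiv_apply hf _ _ _
    _ = fderiv ℝ (fderiv ℝ (uncurry f)) (s, t) (1, 0) (0, 1) := hsymm.eq _ _
    _ = fderiv ℝ (fun q => fderiv ℝ (uncurry f) q (0, 1)) (s, t) (1, 0) :=
        (fderiv_fderiv_apply hf _ _ _).symm
    _ = deriv (fun x => fderiv ℝ (uncurry f) (x, t) (0, 1)) s :=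
        (hasDerivAt_partial_fst (f := fun x y => fderiv ℝ (uncurry f) (x, y) (0, 1))
          (differentiable_fderiv_apply hf (0, 1) (s, t))).deriv.symm

end PartialDerivatives

theorem hasDerivAt_partiallyNull_frame_combination
    {V : Type*} [NormedAddCommGroup V] [NormedSpace ℝ V]
    {T N B₁ B₂ : ℝ → V} {β₁ β₂ β₃ β₄ : ℝ → ℝ} {k₁ k₂ β₂' β₃' β₄' s : ℝ}
    (hT : HasDerivAt T (k₁ • N s) s) (hN : HasDerivAt N (-k₁ • T s + k₂ • B₁ s) s)
    (hB₁ : HasDerivAt B₁ 0 s) (hB₂ : HasDerivAt B₂ (-k₂ • N s) s)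
    (hβ₁ : HasDerivAt β₁ (β₂ s * k₁) s) (hβ₂ : HasDerivAt β₂ β₂' s)
    (hβ₃ : HasDerivAt β₃ β₃' s) (hβ₄ : HasDerivAt β₄ β₄' s) :
    HasDerivAt (fun x => β₁ x • T x + β₂ x • N x + β₃ x • B₁ x + β₄ x • B₂ x)
      ((β₂' + β₁ s * k₁ - β₄ s * k₂) • N s + (β₃' + β₂ s * k₂) • B₁ s + β₄' • B₂ s) s := by
  refine ((((hβ₁.smul hT).add (hβ₂.smul hN)).add (hβ₃.smul hB₁)).add
    (hβ₄.smul hB₂)).congr_deriv ?_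
  module

theorem tangent_evolution_partially_null_general
    (γ T N B₁ B₂ : ℝ → ℝ → (Fin 4 → ℝ))
    (k₁ k₂ β₁ β₂ β₃ β₄ : ℝ → ℝ → ℝ)
    (hγsmooth : ContDiff ℝ (⊤ : ℕ∞) (fun p : ℝ × ℝ => γ p.1 p.2))
    (hNsmooth : ContDiff ℝ (⊤ : ℕ∞) (fun p : ℝ × ℝ => N p.1 p.2))
    (hB₁smooth : ContDiff ℝ (⊤ : ℕ∞) (fun p : ℝ × ℝ => B₁ p.1 p.2))
    (hB₂smooth : ContDiff ℝ (⊤ : ℕ∞) (fun p : ℝ × ℝ => B₂ p.1 p.2))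
    (hβ₁smooth : ContDiff ℝ (⊤ : ℕ∞) (fun p : ℝ × ℝ => β₁ p.1 p.2))
    (hβ₂smooth : ContDiff ℝ (⊤ : ℕ∞) (fun p : ℝ × ℝ => β₂ p.1 p.2))
    (hβ₃smooth : ContDiff ℝ (⊤ : ℕ∞) (fun p : ℝ × ℝ => β₃ p.1 p.2))
    (hβ₄smooth : ContDiff ℝ (⊤ : ℕ∞) (fun p : ℝ × ℝ => β₄ p.1 p.2))
    -- arclength parametrization and Frenet equations (k₃ = 0)
    (hT : ∀ s t : ℝ, T s t = deriv (fun x => γ x t) s)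
    (hfr₁ : ∀ s t : ℝ, deriv (fun x => T x t) s = k₁ s t • N s t)
    (hfr₂ : ∀ s t : ℝ, deriv (fun x => N x t) s = -(k₁ s t) • T s t + k₂ s t • B₁ s t)
    (hfr₃ : ∀ s t : ℝ, deriv (fun x => B₁ x t) s = 0)
    (hfr₄ : ∀ s t : ℝ, deriv (fun x => B₂ x t) s = -(k₂ s t) • N s t)
    (hflow : ∀ s t : ℝ, deriv (fun x => γ s x) t =
      β₁ s t • T s t + β₂ s t • N s t + β₃ s t • B₁ s t + β₄ s t • B₂ s t)
    -- inextensibility: ∂β₁/∂s = β₂k₁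
    (hinext : ∀ s t : ℝ, deriv (fun x => β₁ x t) s = β₂ s t * k₁ s t) :
    ∀ s t : ℝ, deriv (fun x => T s x) t =
      (deriv (fun x => β₂ x t) s + β₁ s t * k₁ s t - β₄ s t * k₂ s t) • N s t +
      (deriv (fun x => β₃ x t) s + β₂ s t * k₂ s t) • B₁ s t +
      (deriv (fun x => β₄ x t) s) • B₂ s t := by
  intro s t
  have hγ : ContDiff ℝ 2 (uncurry γ) := hγsmooth.of_le (WithTop.coe_le_coe.mpr le_top)
  have hTdiff : Differentiable ℝ (fun x => T x t) := by
    simpa only [← hT] using differentiable_deriv_partial_fst hγ t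
  have hasDerivAt_fst {W : Type} [NormedAddCommGroup W] [NormedSpace ℝ W] {F : ℝ → ℝ → W}
      (hF : ContDiff ℝ (⊤ : ℕ∞) (fun p : ℝ × ℝ => F p.1 p.2)) {v : W}
      (hv : deriv (fun x => F x t) s = v) : HasDerivAt (fun x => F x t) v s :=
    hv ▸ (differentiable_partial_fst (hF.differentiable (by simp)) t s).hasDerivAt
  rw [show (fun x => T s x) = fun y => deriv (fun x => γ x y) s from funext (hT s),
    deriv_partial_comm hγ, show (fun x => deriv (fun y => γ x y) t) =
      fun x => β₁ x t • T x t + β₂ x t • N x t + β₃ x t • B₁ x t + β₄ x t • B₂ x t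
      from funext (hflow · t)]
  exact (hasDerivAt_partiallyNull_frame_combination (hfr₁ s t ▸ (hTdiff s).hasDerivAt)
    (hasDerivAt_fst hNsmooth (hfr₂ s t)) (hasDerivAt_fst hB₁smooth (hfr₃ s t))
    (hasDerivAt_fst hB₂smooth (hfr₄ s t)) (hasDerivAt_fst hβ₁smooth (hinext s t))
    (hasDerivAt_fst hβ₂smooth rfl) (hasDerivAt_fst hβ₃smooth rfl)
    (hasDerivAt_fst hβ₄smooth rfl)).deriv

theorem tangent_evolution_partially_null
    (γ T N B₁ B₂ : ℝ → ℝ → (Fin 4 → ℝ))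
    (k₁ k₂ β₁ β₂ β₃ β₄ : ℝ → ℝ → ℝ)
    (hγsmooth : ContDiff ℝ (⊤ : ℕ∞) (fun p : ℝ × ℝ => γ p.1 p.2))
    (hTsmooth : ContDiff ℝ (⊤ : ℕ∞) (fun p : ℝ × ℝ => T p.1 p.2))
    (hNsmooth : ContDiff ℝ (⊤ : ℕ∞) (fun p : ℝ × ℝ => N p.1 p.2))
    (hB₁smooth : ContDiff ℝ (⊤ : ℕ∞) (fun p : ℝ × ℝ => B₁ p.1 p.2))
    (hB₂smooth : ContDiff ℝ (⊤ : ℕ∞) (fun p : ℝ × ℝ => B₂ p.1 p.2))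
    (hk₁smooth : ContDiff ℝ (⊤ : ℕ∞) (fun p : ℝ × ℝ => k₁ p.1 p.2))
    (hk₂smooth : ContDiff ℝ (⊤ : ℕ∞) (fun p : ℝ × ℝ => k₂ p.1 p.2))
    (hβ₁smooth : ContDiff ℝ (⊤ : ℕ∞) (fun p : ℝ × ℝ => β₁ p.1 p.2))
    (hβ₂smooth : ContDiff ℝ (⊤ : ℕ∞) (fun p : ℝ × ℝ => β₂ p.1 p.2))
    (hβ₃smooth : ContDiff ℝ (⊤ : ℕ∞) (fun p : ℝ × ℝ => β₃ p.1 p.2))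
    (hβ₄smooth : ContDiff ℝ (⊤ : ℕ∞) (fun p : ℝ × ℝ => β₄ p.1 p.2))
    (hTT : ∀ s t : ℝ, mink (T s t) (T s t) = 1)
    (hNN : ∀ s t : ℝ, mink (N s t) (N s t) = 1)
    (hB₁B₁ : ∀ s t : ℝ, mink (B₁ s t) (B₁ s t) = 0)
    (hB₂B₂ : ∀ s t : ℝ, mink (B₂ s t) (B₂ s t) = 0)
    (hB₁B₂ : ∀ s t : ℝ, mink (B₁ s t) (B₂ s t) = 1)
    (hTN : ∀ s t : ℝ, mink (T s t) (N s t) = 0)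
    (hTB₁ : ∀ s t : ℝ, mink (T s t) (B₁ s t) = 0)
    (hTB₂ : ∀ s t : ℝ, mink (T s t) (B₂ s t) = 0)
    (hNB₁ : ∀ s t : ℝ, mink (N s t) (B₁ s t) = 0)
    (hNB₂ : ∀ s t : ℝ, mink (N s t) (B₂ s t) = 0)
    -- arclength parametrization and Frenet equations (k₃ = 0)
    (hT : ∀ s t : ℝ, T s t = deriv (fun x => γ x t) s)
    (hunit : ∀ s t : ℝ, mnorm (deriv (fun x => γ x t) s) = 1)
    (hfr₁ : ∀ s t : ℝ, deriv (fun x => T x t) s = k₁ s t • N s t)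
    (hfr₂ : ∀ s t : ℝ, deriv (fun x => N x t) s = -(k₁ s t) • T s t + k₂ s t • B₁ s t)
    (hfr₃ : ∀ s t : ℝ, deriv (fun x => B₁ x t) s = 0)
    (hfr₄ : ∀ s t : ℝ, deriv (fun x => B₂ x t) s = -(k₂ s t) • N s t)
    (hflow : ∀ s t : ℝ, deriv (fun x => γ s x) t =
      β₁ s t • T s t + β₂ s t • N s t + β₃ s t • B₁ s t + β₄ s t • B₂ s t)
    -- inextensibility: ∂β₁/∂s = β₂k₁
    (hinext : ∀ s t : ℝ, deriv (fun x => β₁ x t) s = β₂ s t * k₁ s t) :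
    ∀ s t : ℝ, deriv (fun x => T s x) t =
      (deriv (fun x => β₂ x t) s + β₁ s t * k₁ s t - β₄ s t * k₂ s t) • N s t +
      (deriv (fun x => β₃ x t) s + β₂ s t * k₂ s t) • B₁ s t +
      (deriv (fun x => β₄ x t) s) • B₂ s t :=
  tangent_evolution_partially_null_general γ T N B₁ B₂ k₁ k₂ β₁ β₂ β₃ β₄ hγsmooth hNsmooth hB₁smooth
    hB₂smooth hβ₁smooth hβ₂smooth hβ₃smooth hβ₄smooth hT hfr₁ hfr₂ hfr₃ hfr₄ hflow hinext
end
end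

section
/- Let γ(s,t) be an arclength-parametrized inextensible flow of partially null curves in E⁴₁ with partially null Frenet frame {T, N, B₁, B₂}, curvatures k₁, k₂ (k₃ = 0), and flow ∂γ/∂t = β₁T + β₂N + β₃B₁ + β₄B₂ (so ∂β₁/∂s = β₂k₁). Setting ψ₁ = ⟨∂N/∂t, B₁⟩, ψ₂ = ⟨∂N/∂t, B₂⟩, ψ₃ = ⟨∂B₁/∂t, B₂⟩, the frame evolves by: ∂N/∂t = −(∂β₂/∂s + β₁k₁ − β₄k₂) T + ψ₂ B₁ + ψ₁ B₂, ∂B₁/∂t = −(∂β₄/∂s) T − ψ₁ N + ψ₃ B₁, and ∂B₂/∂t = −(∂β₃/∂s + k₂β₂) T − ψ₂ N − ψ₃ B₂. -/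
/-!
Formalization of inextensible flows of partially null / pseudo null curves in
Minkowski space-time `E⁴₁` (ℝ⁴ with signature (-,+,+,+)).
-/

noncomputable section

/-!
Differentiating the frame relations `⟨X, Y⟩ = const` in `t` shows that the `t`-derivative of the
frame is skew for the Minkowski form. A partially null frame is a basis whose dual basis is
`(T, N, B₂, B₁)`, so each of `∂N/∂t`, `∂B₁/∂t`, `∂B₂/∂t` is determined by its pairings with the
frame; the pairings not named `ψᵢ` come from `∂T/∂t`. Since `∂/∂s` and `∂/∂t` commute, `∂T/∂t` is
the `s`-derivative of the velocity `β₁T + β₂N + β₃B₁ + β₄B₂` of the flow, which the Frenet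
equations compute, inextensibility cancelling its `T`-component.
-/

def minkowskiForm : LinearMap.BilinForm ℝ (Fin 4 → ℝ) :=
  LinearMap.mk₂ ℝ mink (fun _ _ _ => by simp only [mink, Pi.add_apply]; ring)
    (fun _ _ _ => by simp only [mink, Pi.smul_apply, smul_eq_mul]; ring)
    (fun _ _ _ => by simp only [mink, Pi.add_apply]; ring)
    (fun _ _ _ => by simp only [mink, Pi.smul_apply, smul_eq_mul]; ring)

theorem minkowskiForm_apply (v w : Fin 4 → ℝ) : minkowskiForm v w = mink v w := rfl

theorem minkowskiForm_isSymm : minkowskiForm.IsSymm :=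
  ⟨fun v w => by simp only [minkowskiForm_apply, mink]; ring⟩

structure IsPartiallyNullFrame {K V : Type*} [Field K] [AddCommGroup V] [Module K V]
    (g : LinearMap.BilinForm K V) (T N B₁ B₂ : V) : Prop where
  tt : g T T = 1
  nn : g N N = 1
  b₁b₁ : g B₁ B₁ = 0
  b₂b₂ : g B₂ B₂ = 0
  b₁b₂ : g B₁ B₂ = 1
  tn : g T N = 0
  tb₁ : g T B₁ = 0
  tb₂ : g T B₂ = 0
  nb₁ : g N B₁ = 0
  nb₂ : g N B₂ = 0

namespace IsPartiallyNullFrame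

variable {K V : Type*} [Field K] [AddCommGroup V] [Module K V]
  {g : LinearMap.BilinForm K V} {T N B₁ B₂ u : V}

theorem apply_of_eq_linearCombination (hF : IsPartiallyNullFrame g T N B₁ B₂) (hg : g.IsSymm) {a b c d : K}
    (hu : u = a • T + b • N + c • B₁ + d • B₂) :
    g u T = a ∧ g u N = b ∧ g u B₂ = c ∧ g u B₁ = d := by
  subst hu
  simp [hF.tt, hF.nn, hF.b₁b₁, hF.b₂b₂, hF.b₁b₂, hF.tn, hF.tb₁, hF.tb₂, hF.nb₁, hF.nb₂,
    hg.eq N T, hg.eq B₁ T, hg.eq B₂ T, hg.eq B₁ N, hg.eq B₂ N, hg.eq B₂ B₁]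

theorem linearIndependent (hF : IsPartiallyNullFrame g T N B₁ B₂) (hg : g.IsSymm) :
    LinearIndependent K ![T, N, B₁, B₂] := by
  refine Fintype.linearIndependent_iff.mpr fun c hc => ?_
  simp only [Fin.sum_univ_four, Matrix.cons_val_zero, Matrix.cons_val_one, Matrix.cons_val_two,
    Matrix.cons_val_three, Matrix.head_cons, Matrix.tail_cons] at hc
  obtain ⟨h₀, h₁, h₂, h₃⟩ := hF.apply_of_eq_linearCombination hg hc.symm
  simp only [map_zero, LinearMap.zero_apply] at h₀ h₁ h₂ h₃
  intro i
  fin_cases i <;> simp [← h₀, ← h₁, ← h₂, ← h₃]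

theorem eq_linearCombination (hF : IsPartiallyNullFrame g T N B₁ B₂) (hg : g.IsSymm)
    (hV : Module.finrank K V = 4) (v : V) :
    v = g v T • T + g v N • N + g v B₂ • B₁ + g v B₁ • B₂ := by
  have hspan := (hF.linearIndependent hg).span_eq_top_of_card_eq_finrank
    (by rw [Fintype.card_fin, hV])
  obtain ⟨c, hc⟩ := (Submodule.mem_span_range_iff_exists_fun K).mp
    (hspan ▸ Submodule.mem_top (x := v))
  simp only [Fin.sum_univ_four, Matrix.cons_val_zero, Matrix.cons_val_one, Matrix.cons_val_two,
    Matrix.cons_val_three, Matrix.head_cons, Matrix.tail_cons] at hc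
  obtain ⟨h₀, h₁, h₂, h₃⟩ := hF.apply_of_eq_linearCombination hg hc.symm
  rw [h₀, h₁, h₂, h₃, hc]

end IsPartiallyNullFrame

theorem LinearMap.BilinForm.IsSymm.apply_deriv_eq_neg {V : Type*} [NormedAddCommGroup V]
    [NormedSpace ℝ V] [FiniteDimensional ℝ V] {g : LinearMap.BilinForm ℝ V} (hg : g.IsSymm)
    {u v : ℝ → V} {t c : ℝ} (hu : DifferentiableAt ℝ u t) (hv : DifferentiableAt ℝ v t)
    (h : ∀ x, g (u x) (v x) = c) :
    g (deriv v t) (u t) = -g (deriv u t) (v t) := by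
  have hconst := g.toContinuousBilinearMap.deriv_of_bilinear (fun _ => hu) (fun _ => hv)
  simp only [LinearMap.toContinuousBilinearMap_apply, h, deriv_const] at hconst
  rw [hg.eq]
  linarith

section FrameEvolution

variable {V : Type*} [NormedAddCommGroup V] [NormedSpace ℝ V] [FiniteDimensional ℝ V]
  {g : LinearMap.BilinForm ℝ V} {T N B₁ B₂ : ℝ → V} {t a b c : ℝ}

theorem deriv_normal_eq (hg : g.IsSymm) (hV : Module.finrank ℝ V = 4)
    (hF : ∀ x, IsPartiallyNullFrame g (T x) (N x) (B₁ x) (B₂ x))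
    (hT : DifferentiableAt ℝ T t) (hN : DifferentiableAt ℝ N t)
    (hT' : deriv T t = a • N t + b • B₁ t + c • B₂ t) :
    deriv N t = -a • T t + g (deriv N t) (B₂ t) • B₁ t + g (deriv N t) (B₁ t) • B₂ t := by
  obtain ⟨-, hTN, -, -⟩ := (hF t).apply_of_eq_linearCombination hg (hT'.trans (by rw [zero_smul, zero_add]))
  have hNT := hg.apply_deriv_eq_neg hT hN fun x => (hF x).tn
  have hNN := hg.apply_deriv_eq_neg hN hN fun x => (hF x).nn
  conv_lhs => rw [(hF t).eq_linearCombination hg hV (deriv N t), hNT, hTN,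
    show g (deriv N t) (N t) = 0 by linarith]
  module

theorem deriv_binormal₁_eq (hg : g.IsSymm) (hV : Module.finrank ℝ V = 4)
    (hF : ∀ x, IsPartiallyNullFrame g (T x) (N x) (B₁ x) (B₂ x))
    (hT : DifferentiableAt ℝ T t) (hN : DifferentiableAt ℝ N t)
    (hB₁ : DifferentiableAt ℝ B₁ t) (hT' : deriv T t = a • N t + b • B₁ t + c • B₂ t) :
    deriv B₁ t = -c • T t - g (deriv N t) (B₁ t) • N t + g (deriv B₁ t) (B₂ t) • B₁ t := by
  obtain ⟨-, -, -, hTB₁⟩ := (hF t).apply_of_eq_linearCombination hg (hT'.trans (by rw [zero_smul, zero_add]))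
  have hB₁T := hg.apply_deriv_eq_neg hT hB₁ fun x => (hF x).tb₁
  have hB₁N := hg.apply_deriv_eq_neg hN hB₁ fun x => (hF x).nb₁
  have hB₁B₁ := hg.apply_deriv_eq_neg hB₁ hB₁ fun x => (hF x).b₁b₁
  conv_lhs => rw [(hF t).eq_linearCombination hg hV (deriv B₁ t), hB₁T, hTB₁, hB₁N,
    show g (deriv B₁ t) (B₁ t) = 0 by linarith]
  module

theorem deriv_binormal₂_eq (hg : g.IsSymm) (hV : Module.finrank ℝ V = 4)
    (hF : ∀ x, IsPartiallyNullFrame g (T x) (N x) (B₁ x) (B₂ x))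
    (hT : DifferentiableAt ℝ T t) (hN : DifferentiableAt ℝ N t)
    (hB₁ : DifferentiableAt ℝ B₁ t) (hB₂ : DifferentiableAt ℝ B₂ t)
    (hT' : deriv T t = a • N t + b • B₁ t + c • B₂ t) :
    deriv B₂ t = -b • T t - g (deriv N t) (B₂ t) • N t - g (deriv B₁ t) (B₂ t) • B₂ t := by
  obtain ⟨-, -, hTB₂, -⟩ := (hF t).apply_of_eq_linearCombination hg (hT'.trans (by rw [zero_smul, zero_add]))
  have hB₂T := hg.apply_deriv_eq_neg hT hB₂ fun x => (hF x).tb₂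
  have hB₂N := hg.apply_deriv_eq_neg hN hB₂ fun x => (hF x).nb₂
  have hB₂B₁ := hg.apply_deriv_eq_neg hB₁ hB₂ fun x => (hF x).b₁b₂
  have hB₂B₂ := hg.apply_deriv_eq_neg hB₂ hB₂ fun x => (hF x).b₂b₂
  conv_lhs => rw [(hF t).eq_linearCombination hg hV (deriv B₂ t), hB₂T, hTB₂, hB₂N, hB₂B₁,
    show g (deriv B₂ t) (B₂ t) = 0 by linarith]
  module

end FrameEvolution

section PartialDerivatives

variable {E : Type*} [NormedAddCommGroup E] [NormedSpace ℝ E] {F : ℝ → ℝ → E} {s t : ℝ}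

theorem hasDerivAt_slice_left (h : DifferentiableAt ℝ (fun p : ℝ × ℝ => F p.1 p.2) (s, t)) :
    HasDerivAt (fun x => F x t) (fderiv ℝ (fun p : ℝ × ℝ => F p.1 p.2) (s, t) (1, 0)) s :=
  h.hasFDerivAt.comp_hasDerivAt (f := fun x => (x, t)) s
    ((hasDerivAt_id s).prodMk (hasDerivAt_const s t))

theorem hasDerivAt_slice_right (h : DifferentiableAt ℝ (fun p : ℝ × ℝ => F p.1 p.2) (s, t)) :
    HasDerivAt (fun y => F s y) (fderiv ℝ (fun p : ℝ × ℝ => F p.1 p.2) (s, t) (0, 1)) t :=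
  h.hasFDerivAt.comp_hasDerivAt (f := fun y => (s, y)) t
    ((hasDerivAt_const t s).prodMk (hasDerivAt_id t))

theorem deriv_deriv_comm (hF : ContDiff ℝ 2 (fun p : ℝ × ℝ => F p.1 p.2)) :
    deriv (fun y => deriv (fun x => F x y) s) t =
      deriv (fun x => deriv (fun y => F x y) t) s := by
  set G := fun p : ℝ × ℝ => F p.1 p.2
  have hG : Differentiable ℝ G := hF.differentiable (by simp)
  have hG' : Differentiable ℝ (fderiv ℝ G) :=
    (hF.fderiv_right (m := 1) le_rfl).differentiable (by simp)
  simp only [fun y => (hasDerivAt_slice_left (F := F) (hG (s, y))).deriv,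
    fun x => (hasDerivAt_slice_right (F := F) (hG (x, t))).deriv]
  rw [((hasDerivAt_slice_right (F := fun x y => fderiv ℝ G (x, y)) (hG' (s, t))).clm_apply
      (hasDerivAt_const t ((1 : ℝ), (0 : ℝ)))).deriv,
    ((hasDerivAt_slice_left (F := fun x y => fderiv ℝ G (x, y)) (hG' (s, t))).clm_apply
      (hasDerivAt_const s ((0 : ℝ), (1 : ℝ)))).deriv]
  -- both sides are `D²G (s, t)` applied to `(1, 0)` and `(0, 1)`, in opposite orders
  simpa using hF.contDiffAt.isSymmSndFDerivAt (by simp) (0, 1) (1, 0)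

end PartialDerivatives

section FrenetFlow

variable {E : Type*} [NormedAddCommGroup E] [NormedSpace ℝ E]

theorem hasDerivAt_frenet_combination {T N B₁ B₂ : ℝ → E} {β₁ β₂ β₃ β₄ : ℝ → ℝ}
    {k₁ k₂ β₂' β₃' β₄' s : ℝ}
    (hT : HasDerivAt T (k₁ • N s) s) (hN : HasDerivAt N (-k₁ • T s + k₂ • B₁ s) s)
    (hB₁ : HasDerivAt B₁ 0 s) (hB₂ : HasDerivAt B₂ (-k₂ • N s) s)
    (hβ₁ : HasDerivAt β₁ (β₂ s * k₁) s) (hβ₂ : HasDerivAt β₂ β₂' s)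
    (hβ₃ : HasDerivAt β₃ β₃' s) (hβ₄ : HasDerivAt β₄ β₄' s) :
    HasDerivAt (fun x => β₁ x • T x + β₂ x • N x + β₃ x • B₁ x + β₄ x • B₂ x)
      ((β₂' + β₁ s * k₁ - β₄ s * k₂) • N s + (β₃' + k₂ * β₂ s) • B₁ s + β₄' • B₂ s) s :=
  ((((hβ₁.smul hT).add (hβ₂.smul hN)).add (hβ₃.smul hB₁)).add (hβ₄.smul hB₂)).congr_deriv
    (by module)

theorem deriv_tangent_of_flow {γ T N B₁ B₂ : ℝ → ℝ → E} {k₁ k₂ β₁ β₂ β₃ β₄ : ℝ → ℝ → ℝ}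
    {s t : ℝ} (hγ : ContDiff ℝ 2 (fun p : ℝ × ℝ => γ p.1 p.2))
    (hTd : DifferentiableAt ℝ (fun p : ℝ × ℝ => T p.1 p.2) (s, t))
    (hNd : DifferentiableAt ℝ (fun p : ℝ × ℝ => N p.1 p.2) (s, t))
    (hB₁d : DifferentiableAt ℝ (fun p : ℝ × ℝ => B₁ p.1 p.2) (s, t))
    (hB₂d : DifferentiableAt ℝ (fun p : ℝ × ℝ => B₂ p.1 p.2) (s, t))
    (hβ₁d : DifferentiableAt ℝ (fun p : ℝ × ℝ => β₁ p.1 p.2) (s, t))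
    (hβ₂d : DifferentiableAt ℝ (fun p : ℝ × ℝ => β₂ p.1 p.2) (s, t))
    (hβ₃d : DifferentiableAt ℝ (fun p : ℝ × ℝ => β₃ p.1 p.2) (s, t))
    (hβ₄d : DifferentiableAt ℝ (fun p : ℝ × ℝ => β₄ p.1 p.2) (s, t))
    (hT : ∀ y, T s y = deriv (fun x => γ x y) s)
    (hflow : ∀ x, deriv (fun y => γ x y) t =
      β₁ x t • T x t + β₂ x t • N x t + β₃ x t • B₁ x t + β₄ x t • B₂ x t)
    (hfr₁ : deriv (fun x => T x t) s = k₁ s t • N s t)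
    (hfr₂ : deriv (fun x => N x t) s = -(k₁ s t) • T s t + k₂ s t • B₁ s t)
    (hfr₃ : deriv (fun x => B₁ x t) s = 0)
    (hfr₄ : deriv (fun x => B₂ x t) s = -(k₂ s t) • N s t)
    (hinext : deriv (fun x => β₁ x t) s = β₂ s t * k₁ s t) :
    deriv (fun y => T s y) t =
      (deriv (fun x => β₂ x t) s + β₁ s t * k₁ s t - β₄ s t * k₂ s t) • N s t +
      (deriv (fun x => β₃ x t) s + k₂ s t * β₂ s t) • B₁ s t +
      deriv (fun x => β₄ x t) s • B₂ s t := by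
  rw [funext hT, deriv_deriv_comm hγ, funext hflow]
  refine (hasDerivAt_frenet_combination ?_ ?_ ?_ ?_ ?_ ?_ ?_ ?_).deriv
  · exact hfr₁ ▸ (hasDerivAt_slice_left hTd).differentiableAt.hasDerivAt
  · exact hfr₂ ▸ (hasDerivAt_slice_left hNd).differentiableAt.hasDerivAt
  · exact hfr₃ ▸ (hasDerivAt_slice_left hB₁d).differentiableAt.hasDerivAt
  · exact hfr₄ ▸ (hasDerivAt_slice_left hB₂d).differentiableAt.hasDerivAt
  · exact hinext ▸ (hasDerivAt_slice_left hβ₁d).differentiableAt.hasDerivAt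
  · exact (hasDerivAt_slice_left hβ₂d).differentiableAt.hasDerivAt
  · exact (hasDerivAt_slice_left hβ₃d).differentiableAt.hasDerivAt
  · exact (hasDerivAt_slice_left hβ₄d).differentiableAt.hasDerivAt

end FrenetFlow

theorem frame_evolution_partially_null_general
    (γ T N B₁ B₂ : ℝ → ℝ → (Fin 4 → ℝ))
    (k₁ k₂ β₁ β₂ β₃ β₄ : ℝ → ℝ → ℝ)
    (ψ₁ ψ₂ ψ₃ : ℝ → ℝ → ℝ)
    (hγsmooth : ContDiff ℝ (⊤ : ℕ∞) (fun p : ℝ × ℝ => γ p.1 p.2))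
    (hTsmooth : ContDiff ℝ (⊤ : ℕ∞) (fun p : ℝ × ℝ => T p.1 p.2))
    (hNsmooth : ContDiff ℝ (⊤ : ℕ∞) (fun p : ℝ × ℝ => N p.1 p.2))
    (hB₁smooth : ContDiff ℝ (⊤ : ℕ∞) (fun p : ℝ × ℝ => B₁ p.1 p.2))
    (hB₂smooth : ContDiff ℝ (⊤ : ℕ∞) (fun p : ℝ × ℝ => B₂ p.1 p.2))
    (hβ₁smooth : ContDiff ℝ (⊤ : ℕ∞) (fun p : ℝ × ℝ => β₁ p.1 p.2))
    (hβ₂smooth : ContDiff ℝ (⊤ : ℕ∞) (fun p : ℝ × ℝ => β₂ p.1 p.2))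
    (hβ₃smooth : ContDiff ℝ (⊤ : ℕ∞) (fun p : ℝ × ℝ => β₃ p.1 p.2))
    (hβ₄smooth : ContDiff ℝ (⊤ : ℕ∞) (fun p : ℝ × ℝ => β₄ p.1 p.2))
    (hTT : ∀ s t : ℝ, mink (T s t) (T s t) = 1)
    (hNN : ∀ s t : ℝ, mink (N s t) (N s t) = 1)
    (hB₁B₁ : ∀ s t : ℝ, mink (B₁ s t) (B₁ s t) = 0)
    (hB₂B₂ : ∀ s t : ℝ, mink (B₂ s t) (B₂ s t) = 0)
    (hB₁B₂ : ∀ s t : ℝ, mink (B₁ s t) (B₂ s t) = 1)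
    (hTN : ∀ s t : ℝ, mink (T s t) (N s t) = 0)
    (hTB₁ : ∀ s t : ℝ, mink (T s t) (B₁ s t) = 0)
    (hTB₂ : ∀ s t : ℝ, mink (T s t) (B₂ s t) = 0)
    (hNB₁ : ∀ s t : ℝ, mink (N s t) (B₁ s t) = 0)
    (hNB₂ : ∀ s t : ℝ, mink (N s t) (B₂ s t) = 0)
    -- arclength parametrization and Frenet equations (k₃ = 0)
    (hT : ∀ s t : ℝ, T s t = deriv (fun x => γ x t) s)
    (hfr₁ : ∀ s t : ℝ, deriv (fun x => T x t) s = k₁ s t • N s t)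
    (hfr₂ : ∀ s t : ℝ, deriv (fun x => N x t) s = -(k₁ s t) • T s t + k₂ s t • B₁ s t)
    (hfr₃ : ∀ s t : ℝ, deriv (fun x => B₁ x t) s = 0)
    (hfr₄ : ∀ s t : ℝ, deriv (fun x => B₂ x t) s = -(k₂ s t) • N s t)
    (hflow : ∀ s t : ℝ, deriv (fun x => γ s x) t =
      β₁ s t • T s t + β₂ s t • N s t + β₃ s t • B₁ s t + β₄ s t • B₂ s t)
    -- inextensibility: ∂β₁/∂s = β₂k₁
    (hinext : ∀ s t : ℝ, deriv (fun x => β₁ x t) s = β₂ s t * k₁ s t)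
    (hψ₁ : ∀ s t : ℝ, ψ₁ s t = mink (deriv (fun x => N s x) t) (B₁ s t))
    (hψ₂ : ∀ s t : ℝ, ψ₂ s t = mink (deriv (fun x => N s x) t) (B₂ s t))
    (hψ₃ : ∀ s t : ℝ, ψ₃ s t = mink (deriv (fun x => B₁ s x) t) (B₂ s t)) :
    ∀ s t : ℝ,
      deriv (fun x => N s x) t =
        -(deriv (fun x => β₂ x t) s + β₁ s t * k₁ s t - β₄ s t * k₂ s t) • T s t +
        ψ₂ s t • B₁ s t + ψ₁ s t • B₂ s t ∧
      deriv (fun x => B₁ s x) t =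
        -(deriv (fun x => β₄ x t) s) • T s t - ψ₁ s t • N s t + ψ₃ s t • B₁ s t ∧
      deriv (fun x => B₂ s x) t =
        -(deriv (fun x => β₃ x t) s + k₂ s t * β₂ s t) • T s t - ψ₂ s t • N s t -
        ψ₃ s t • B₂ s t := by
  intro s t
  have hF : ∀ y, IsPartiallyNullFrame minkowskiForm (T s y) (N s y) (B₁ s y) (B₂ s y) :=
    fun y => ⟨hTT s y, hNN s y, hB₁B₁ s y, hB₂B₂ s y, hB₁B₂ s y, hTN s y, hTB₁ s y, hTB₂ s y,
      hNB₁ s y, hNB₂ s y⟩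
  have hTd := hTsmooth.differentiable (by simp) (s, t)
  have hNd := hNsmooth.differentiable (by simp) (s, t)
  have hB₁d := hB₁smooth.differentiable (by simp) (s, t)
  have hB₂d := hB₂smooth.differentiable (by simp) (s, t)
  have hT' := deriv_tangent_of_flow (hγsmooth.of_le (by norm_cast)) hTd hNd hB₁d hB₂d
    (hβ₁smooth.differentiable (by simp) _) (hβ₂smooth.differentiable (by simp) _)
    (hβ₃smooth.differentiable (by simp) _) (hβ₄smooth.differentiable (by simp) _)
    (hT s) (fun x => hflow x t) (hfr₁ s t) (hfr₂ s t) (hfr₃ s t) (hfr₄ s t) (hinext s t)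
  have hTt := (hasDerivAt_slice_right hTd).differentiableAt
  have hNt := (hasDerivAt_slice_right hNd).differentiableAt
  have hB₁t := (hasDerivAt_slice_right hB₁d).differentiableAt
  have hB₂t := (hasDerivAt_slice_right hB₂d).differentiableAt
  have hV : Module.finrank ℝ (Fin 4 → ℝ) = 4 := Module.finrank_fin_fun ℝ
  rw [hψ₁, hψ₂, hψ₃]
  exact ⟨deriv_normal_eq minkowskiForm_isSymm hV hF hTt hNt hT',
    deriv_binormal₁_eq minkowskiForm_isSymm hV hF hTt hNt hB₁t hT',
    deriv_binormal₂_eq minkowskiForm_isSymm hV hF hTt hNt hB₁t hB₂t hT'⟩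

theorem frame_evolution_partially_null
    (γ T N B₁ B₂ : ℝ → ℝ → (Fin 4 → ℝ))
    (k₁ k₂ β₁ β₂ β₃ β₄ : ℝ → ℝ → ℝ)
    (ψ₁ ψ₂ ψ₃ : ℝ → ℝ → ℝ)
    (hγsmooth : ContDiff ℝ (⊤ : ℕ∞) (fun p : ℝ × ℝ => γ p.1 p.2))
    (hTsmooth : ContDiff ℝ (⊤ : ℕ∞) (fun p : ℝ × ℝ => T p.1 p.2))
    (hNsmooth : ContDiff ℝ (⊤ : ℕ∞) (fun p : ℝ × ℝ => N p.1 p.2))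
    (hB₁smooth : ContDiff ℝ (⊤ : ℕ∞) (fun p : ℝ × ℝ => B₁ p.1 p.2))
    (hB₂smooth : ContDiff ℝ (⊤ : ℕ∞) (fun p : ℝ × ℝ => B₂ p.1 p.2))
    (hk₁smooth : ContDiff ℝ (⊤ : ℕ∞) (fun p : ℝ × ℝ => k₁ p.1 p.2))
    (hk₂smooth : ContDiff ℝ (⊤ : ℕ∞) (fun p : ℝ × ℝ => k₂ p.1 p.2))
    (hβ₁smooth : ContDiff ℝ (⊤ : ℕ∞) (fun p : ℝ × ℝ => β₁ p.1 p.2))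
    (hβ₂smooth : ContDiff ℝ (⊤ : ℕ∞) (fun p : ℝ × ℝ => β₂ p.1 p.2))
    (hβ₃smooth : ContDiff ℝ (⊤ : ℕ∞) (fun p : ℝ × ℝ => β₃ p.1 p.2))
    (hβ₄smooth : ContDiff ℝ (⊤ : ℕ∞) (fun p : ℝ × ℝ => β₄ p.1 p.2))
    (hTT : ∀ s t : ℝ, mink (T s t) (T s t) = 1)
    (hNN : ∀ s t : ℝ, mink (N s t) (N s t) = 1)
    (hB₁B₁ : ∀ s t : ℝ, mink (B₁ s t) (B₁ s t) = 0)
    (hB₂B₂ : ∀ s t : ℝ, mink (B₂ s t) (B₂ s t) = 0)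
    (hB₁B₂ : ∀ s t : ℝ, mink (B₁ s t) (B₂ s t) = 1)
    (hTN : ∀ s t : ℝ, mink (T s t) (N s t) = 0)
    (hTB₁ : ∀ s t : ℝ, mink (T s t) (B₁ s t) = 0)
    (hTB₂ : ∀ s t : ℝ, mink (T s t) (B₂ s t) = 0)
    (hNB₁ : ∀ s t : ℝ, mink (N s t) (B₁ s t) = 0)
    (hNB₂ : ∀ s t : ℝ, mink (N s t) (B₂ s t) = 0)
    -- arclength parametrization and Frenet equations (k₃ = 0)
    (hT : ∀ s t : ℝ, T s t = deriv (fun x => γ x t) s)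
    (hunit : ∀ s t : ℝ, mnorm (deriv (fun x => γ x t) s) = 1)
    (hfr₁ : ∀ s t : ℝ, deriv (fun x => T x t) s = k₁ s t • N s t)
    (hfr₂ : ∀ s t : ℝ, deriv (fun x => N x t) s = -(k₁ s t) • T s t + k₂ s t • B₁ s t)
    (hfr₃ : ∀ s t : ℝ, deriv (fun x => B₁ x t) s = 0)
    (hfr₄ : ∀ s t : ℝ, deriv (fun x => B₂ x t) s = -(k₂ s t) • N s t)
    (hflow : ∀ s t : ℝ, deriv (fun x => γ s x) t =
      β₁ s t • T s t + β₂ s t • N s t + β₃ s t • B₁ s t + β₄ s t • B₂ s t)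
    -- inextensibility: ∂β₁/∂s = β₂k₁
    (hinext : ∀ s t : ℝ, deriv (fun x => β₁ x t) s = β₂ s t * k₁ s t)
    (hψ₁ : ∀ s t : ℝ, ψ₁ s t = mink (deriv (fun x => N s x) t) (B₁ s t))
    (hψ₂ : ∀ s t : ℝ, ψ₂ s t = mink (deriv (fun x => N s x) t) (B₂ s t))
    (hψ₃ : ∀ s t : ℝ, ψ₃ s t = mink (deriv (fun x => B₁ s x) t) (B₂ s t)) :
    ∀ s t : ℝ,
      deriv (fun x => N s x) t =
        -(deriv (fun x => β₂ x t) s + β₁ s t * k₁ s t - β₄ s t * k₂ s t) • T s t +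
        ψ₂ s t • B₁ s t + ψ₁ s t • B₂ s t ∧
      deriv (fun x => B₁ s x) t =
        -(deriv (fun x => β₄ x t) s) • T s t - ψ₁ s t • N s t + ψ₃ s t • B₁ s t ∧
      deriv (fun x => B₂ s x) t =
        -(deriv (fun x => β₃ x t) s + k₂ s t * β₂ s t) • T s t - ψ₂ s t • N s t -
        ψ₃ s t • B₂ s t :=
  frame_evolution_partially_null_general γ T N B₁ B₂ k₁ k₂ β₁ β₂ β₃ β₄ ψ₁ ψ₂ ψ₃ hγsmooth hTsmooth
    hNsmooth hB₁smooth hB₂smooth hβ₁smooth hβ₂smooth hβ₃smooth hβ₄smooth hTT hNN hB₁B₁ hB₂B₂ hB₁B₂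
    hTN hTB₁ hTB₂ hNB₁ hNB₂ hT hfr₁ hfr₂ hfr₃ hfr₄ hflow hinext hψ₁ hψ₂ hψ₃
end
end

section
/- Let γ(s,t) be an arclength-parametrized inextensible flow of partially null curves in E⁴₁ with partially null Frenet frame {T, N, B₁, B₂}, curvatures k₁, k₂ (k₃ = 0), flow ∂γ/∂t = β₁T + β₂N + β₃B₁ + β₄B₂ (so ∂β₁/∂s = β₂k₁), and ψ₂ = ⟨∂N/∂t, B₂⟩. Then ∂²β₃/∂s² + ∂(β₂k₂)/∂s + (∂β₂/∂s)k₂ + β₁k₁k₂ − β₄k₂² − ψ₂k₁ = 0. -/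
/-!
Differentiating the flow equation in `s` and commuting `∂/∂s` with `∂/∂t` on `γ` expresses
`∂T/∂t` in the frame; inextensibility kills its `T`-component. Commuting the partials once more,
`∂/∂s (∂T/∂t) = ∂/∂t (k₁ N)`. Pairing with `B₂` picks out the `B₁`-components: on the left the
Frenet equations give `k₂ ⟨∂T/∂t, N⟩ + ∂/∂s ⟨∂T/∂t, B₂⟩`, on the right `⟨N, B₂⟩ = 0` leaves `k₁ ψ₂`.
-/

noncomputable section

section PartialDerivatives

variable {F : Type*} [NormedAddCommGroup F] [NormedSpace ℝ F] {n : WithTop ℕ∞} {f : ℝ → ℝ → F}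

theorem ContDiff.slice_fst (hf : ContDiff ℝ n fun p : ℝ × ℝ => f p.1 p.2) (t : ℝ) :
    ContDiff ℝ n fun x => f x t :=
  hf.comp (contDiff_id.prodMk contDiff_const)

theorem ContDiff.slice_snd (hf : ContDiff ℝ n fun p : ℝ × ℝ => f p.1 p.2) (s : ℝ) :
    ContDiff ℝ n fun y => f s y :=
  hf.comp (contDiff_const.prodMk contDiff_id)

theorem hasDerivAt_slice_fst (hf : ContDiff ℝ n fun p : ℝ × ℝ => f p.1 p.2) (hn : n ≠ 0)
    (s t : ℝ) : HasDerivAt (fun x => f x t) (deriv (fun x => f x t) s) s :=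
  ((hf.slice_fst t).differentiable hn s).hasDerivAt

theorem hasDerivAt_slice_snd (hf : ContDiff ℝ n fun p : ℝ × ℝ => f p.1 p.2) (hn : n ≠ 0)
    (s t : ℝ) : HasDerivAt (fun y => f s y) (deriv (fun y => f s y) t) t :=
  ((hf.slice_snd s).differentiable hn t).hasDerivAt

theorem hasDerivAt_deriv_slice_fst (hf : ContDiff ℝ n fun p : ℝ × ℝ => f p.1 p.2) (hn : 2 ≤ n)
    (s t : ℝ) : HasDerivAt (deriv fun x => f x t) (deriv (deriv fun x => f x t) s) s :=
  have hf₂ : ContDiff ℝ (1 + 1) fun x => f x t := (hf.slice_fst t).of_le hn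
  ((contDiff_succ_iff_deriv.1 hf₂).2.2.differentiable one_ne_zero s).hasDerivAt

theorem HasFDerivAt.hasDerivAt_slice_fst {g : ℝ × ℝ → F} {g' : ℝ × ℝ →L[ℝ] F} {a b : ℝ}
    (h : HasFDerivAt g g' (a, b)) : HasDerivAt (fun x => g (x, b)) (g' (1, 0)) a :=
  h.comp_hasDerivAt a ((hasDerivAt_id a).prodMk (hasDerivAt_const a b))

theorem HasFDerivAt.hasDerivAt_slice_snd {g : ℝ × ℝ → F} {g' : ℝ × ℝ →L[ℝ] F} {a b : ℝ}
    (h : HasFDerivAt g g' (a, b)) : HasDerivAt (fun y => g (a, y)) (g' (0, 1)) b :=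
  h.comp_hasDerivAt b ((hasDerivAt_const b a).prodMk (hasDerivAt_id b))

theorem deriv_deriv_comm_of_contDiff (hf : ContDiff ℝ 2 fun p : ℝ × ℝ => f p.1 p.2) (s t : ℝ) :
    deriv (fun x => deriv (fun y => f x y) t) s =
      deriv (fun y => deriv (fun x => f x y) s) t := by
  set g : ℝ × ℝ → F := fun p => f p.1 p.2
  have hg (p : ℝ × ℝ) : HasFDerivAt g (fderiv ℝ g p) p :=
    (hf.differentiable two_ne_zero p).hasFDerivAt
  have hg' (p : ℝ × ℝ) : HasFDerivAt (fderiv ℝ g) (fderiv ℝ (fderiv ℝ g) p) p :=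
    ((hf.fderiv_right (m := 1) le_rfl).differentiable one_ne_zero p).hasFDerivAt
  have hst : (fun x => deriv (fun y => f x y) t) = fun x => fderiv ℝ g (x, t) (0, 1) :=
    funext fun x => (hg (x, t)).hasDerivAt_slice_snd.deriv
  have hts : (fun y => deriv (fun x => f x y) s) = fun y => fderiv ℝ g (s, y) (1, 0) :=
    funext fun y => (hg (s, y)).hasDerivAt_slice_fst.deriv
  rw [hst, hts, ((hg' (s, t)).hasDerivAt_slice_fst.clm_apply (hasDerivAt_const s _)).deriv,
    ((hg' (s, t)).hasDerivAt_slice_snd.clm_apply (hasDerivAt_const t _)).deriv]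
  simpa using (hf.contDiffAt.isSymmSndFDerivAt (by simp)).eq (1, 0) (0, 1)

end PartialDerivatives

section PartiallyNullFrenetFrame

variable {F : Type*} [NormedAddCommGroup F] [NormedSpace ℝ F]

theorem hasDerivAt_partiallyNullFrenet_combination {T N B₁ B₂ : ℝ → F} {k₁ k₂ : ℝ → ℝ} {x : ℝ}
    (hT : HasDerivAt T (k₁ x • N x) x) (hN : HasDerivAt N (-(k₁ x) • T x + k₂ x • B₁ x) x)
    (hB₁ : HasDerivAt B₁ 0 x) (hB₂ : HasDerivAt B₂ (-(k₂ x) • N x) x)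
    {a b c d : ℝ → ℝ} {a' b' c' d' : ℝ} (ha : HasDerivAt a a' x) (hb : HasDerivAt b b' x)
    (hc : HasDerivAt c c' x) (hd : HasDerivAt d d' x) :
    HasDerivAt (fun y => a y • T y + b y • N y + c y • B₁ y + d y • B₂ y)
      ((a' - k₁ x * b x) • T x + (k₁ x * a x + b' - k₂ x * d x) • N x +
        (k₂ x * b x + c') • B₁ x + d' • B₂ x) x := by
  refine ((((ha.smul hT).add (hb.smul hN)).add (hc.smul hB₁)).add (hd.smul hB₂)).congr_deriv ?_
  module

/-- The vanishing `T`-component is kept so that the right-hand side is again a frame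
combination. -/
theorem deriv_tangent_of_inextensible_flow {γ T N B₁ B₂ : ℝ → ℝ → F}
    {k₁ k₂ β₁ β₂ β₃ β₄ : ℝ → ℝ → ℝ} {s t β₂' β₃' β₄' : ℝ}
    (hγ : ContDiff ℝ 2 fun p : ℝ × ℝ => γ p.1 p.2)
    (hT : ∀ y, T s y = deriv (fun x => γ x y) s)
    (hflow : ∀ x, deriv (fun y => γ x y) t =
      β₁ x t • T x t + β₂ x t • N x t + β₃ x t • B₁ x t + β₄ x t • B₂ x t)
    (hTs : HasDerivAt (T · t) (k₁ s t • N s t) s)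
    (hNs : HasDerivAt (N · t) (-(k₁ s t) • T s t + k₂ s t • B₁ s t) s)
    (hB₁s : HasDerivAt (B₁ · t) 0 s) (hB₂s : HasDerivAt (B₂ · t) (-(k₂ s t) • N s t) s)
    (hβ₁ : HasDerivAt (β₁ · t) (β₂ s t * k₁ s t) s) (hβ₂ : HasDerivAt (β₂ · t) β₂' s)
    (hβ₃ : HasDerivAt (β₃ · t) β₃' s) (hβ₄ : HasDerivAt (β₄ · t) β₄' s) :
    deriv (T s ·) t = (0 : ℝ) • T s t + (β₁ s t * k₁ s t + β₂' - β₄ s t * k₂ s t) • N s t +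
      (β₂ s t * k₂ s t + β₃') • B₁ s t + β₄' • B₂ s t := by
  rw [funext hT, ← deriv_deriv_comm_of_contDiff hγ, funext hflow,
    (hasDerivAt_partiallyNullFrenet_combination (k₁ := (k₁ · t)) (k₂ := (k₂ · t))
      hTs hNs hB₁s hB₂s hβ₁ hβ₂ hβ₃ hβ₄).deriv]
  module

end PartiallyNullFrenetFrame

theorem mink_add_left_s6 (u v w : Fin 4 → ℝ) : mink (u + v) w = mink u w + mink v w := by
  simp only [mink, Pi.add_apply]
  ring

theorem mink_smul_left_s6 (c : ℝ) (v w : Fin 4 → ℝ) : mink (c • v) w = c * mink v w := by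
  simp only [mink, Pi.smul_apply, smul_eq_mul]
  ring

theorem mink_frame_combination_B₂ {T N B₁ B₂ : Fin 4 → ℝ} (hTB₂ : mink T B₂ = 0)
    (hNB₂ : mink N B₂ = 0) (hB₁B₂ : mink B₁ B₂ = 1) (hB₂B₂ : mink B₂ B₂ = 0) (a b c d : ℝ) :
    mink (a • T + b • N + c • B₁ + d • B₂) B₂ = c := by
  simp only [mink_add_left_s6, mink_smul_left_s6, hTB₂, hNB₂, hB₁B₂, hB₂B₂]
  ring

theorem pde_B1_component_partially_null_general
    (γ T N B₁ B₂ : ℝ → ℝ → (Fin 4 → ℝ))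
    (k₁ k₂ β₁ β₂ β₃ β₄ : ℝ → ℝ → ℝ)
    (ψ₂ : ℝ → ℝ → ℝ)
    (hγsmooth : ContDiff ℝ (⊤ : ℕ∞) (fun p : ℝ × ℝ => γ p.1 p.2))
    (hTsmooth : ContDiff ℝ (⊤ : ℕ∞) (fun p : ℝ × ℝ => T p.1 p.2))
    (hNsmooth : ContDiff ℝ (⊤ : ℕ∞) (fun p : ℝ × ℝ => N p.1 p.2))
    (hB₁smooth : ContDiff ℝ (⊤ : ℕ∞) (fun p : ℝ × ℝ => B₁ p.1 p.2))
    (hB₂smooth : ContDiff ℝ (⊤ : ℕ∞) (fun p : ℝ × ℝ => B₂ p.1 p.2))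
    (hk₁smooth : ContDiff ℝ (⊤ : ℕ∞) (fun p : ℝ × ℝ => k₁ p.1 p.2))
    (hk₂smooth : ContDiff ℝ (⊤ : ℕ∞) (fun p : ℝ × ℝ => k₂ p.1 p.2))
    (hβ₁smooth : ContDiff ℝ (⊤ : ℕ∞) (fun p : ℝ × ℝ => β₁ p.1 p.2))
    (hβ₂smooth : ContDiff ℝ (⊤ : ℕ∞) (fun p : ℝ × ℝ => β₂ p.1 p.2))
    (hβ₃smooth : ContDiff ℝ (⊤ : ℕ∞) (fun p : ℝ × ℝ => β₃ p.1 p.2))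
    (hβ₄smooth : ContDiff ℝ (⊤ : ℕ∞) (fun p : ℝ × ℝ => β₄ p.1 p.2))
    (hB₂B₂ : ∀ s t : ℝ, mink (B₂ s t) (B₂ s t) = 0)
    (hB₁B₂ : ∀ s t : ℝ, mink (B₁ s t) (B₂ s t) = 1)
    (hTB₂ : ∀ s t : ℝ, mink (T s t) (B₂ s t) = 0)
    (hNB₂ : ∀ s t : ℝ, mink (N s t) (B₂ s t) = 0)
    -- arclength parametrization and Frenet equations (k₃ = 0)
    (hT : ∀ s t : ℝ, T s t = deriv (fun x => γ x t) s)
    (hfr₁ : ∀ s t : ℝ, deriv (fun x => T x t) s = k₁ s t • N s t)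
    (hfr₂ : ∀ s t : ℝ, deriv (fun x => N x t) s = -(k₁ s t) • T s t + k₂ s t • B₁ s t)
    (hfr₃ : ∀ s t : ℝ, deriv (fun x => B₁ x t) s = 0)
    (hfr₄ : ∀ s t : ℝ, deriv (fun x => B₂ x t) s = -(k₂ s t) • N s t)
    (hflow : ∀ s t : ℝ, deriv (fun x => γ s x) t =
      β₁ s t • T s t + β₂ s t • N s t + β₃ s t • B₁ s t + β₄ s t • B₂ s t)
    -- inextensibility: ∂β₁/∂s = β₂k₁
    (hinext : ∀ s t : ℝ, deriv (fun x => β₁ x t) s = β₂ s t * k₁ s t)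
    (hψ₂ : ∀ s t : ℝ, ψ₂ s t = mink (deriv (fun x => N s x) t) (B₂ s t)) :
    ∀ s t : ℝ,
      deriv (fun x => deriv (fun y => β₃ y t) x) s + deriv (fun x => β₂ x t * k₂ x t) s +
      deriv (fun x => β₂ x t) s * k₂ s t + β₁ s t * k₁ s t * k₂ s t -
      β₄ s t * (k₂ s t) ^ 2 - ψ₂ s t * k₁ s t = 0 := by
  intro s t
  have h0 : ((⊤ : ℕ∞) : WithTop ℕ∞) ≠ 0 := by simp
  have h2 : (2 : WithTop ℕ∞) ≤ (⊤ : ℕ∞) := by norm_cast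
  have hslice x {β : ℝ → ℝ → ℝ}
      (hsmooth : ContDiff ℝ (⊤ : ℕ∞) fun p : ℝ × ℝ => β p.1 p.2) :=
    hasDerivAt_slice_fst hsmooth h0 x t
  have hTs x : HasDerivAt (T · t) (k₁ x t • N x t) x :=
    hfr₁ x t ▸ hasDerivAt_slice_fst hTsmooth h0 x t
  have hNs x : HasDerivAt (N · t) (-(k₁ x t) • T x t + k₂ x t • B₁ x t) x :=
    hfr₂ x t ▸ hasDerivAt_slice_fst hNsmooth h0 x t
  have hB₁s x : HasDerivAt (B₁ · t) 0 x := hfr₃ x t ▸ hasDerivAt_slice_fst hB₁smooth h0 x t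
  have hB₂s x : HasDerivAt (B₂ · t) (-(k₂ x t) • N x t) x :=
    hfr₄ x t ▸ hasDerivAt_slice_fst hB₂smooth h0 x t
  have hβ₁s x : HasDerivAt (β₁ · t) (β₂ x t * k₁ x t) x := hinext x t ▸ hslice x hβ₁smooth
  have hTt x := deriv_tangent_of_inextensible_flow (hγsmooth.of_le h2) (hT x) (hflow · t)
    (hTs x) (hNs x) (hB₁s x) (hB₂s x) (hβ₁s x) (hslice x hβ₂smooth) (hslice x hβ₃smooth)
    (hslice x hβ₄smooth)
  have ha : DifferentiableAt ℝ (fun x => β₁ x t * k₁ x t + deriv (β₂ · t) x - β₄ x t * k₂ x t) s :=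
    (((hβ₁s s).mul (hslice s hk₁smooth)).add (hasDerivAt_deriv_slice_fst hβ₂smooth h2 s t)).sub
      ((hslice s hβ₄smooth).mul (hslice s hk₂smooth)) |>.differentiableAt
  have hβ₂k₂ : DifferentiableAt ℝ (fun x => β₂ x t * k₂ x t) s :=
    ((hslice s hβ₂smooth).mul (hslice s hk₂smooth)).differentiableAt
  have hTts : HasDerivAt (fun x => deriv (T x ·) t) _ s :=
    (hasDerivAt_partiallyNullFrenet_combination (k₁ := (k₁ · t)) (k₂ := (k₂ · t)) (hTs s)
      (hNs s) (hB₁s s) (hB₂s s) (hasDerivAt_const s (0 : ℝ)) ha.hasDerivAt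
      (hβ₂k₂.hasDerivAt.add (hasDerivAt_deriv_slice_fst hβ₃smooth h2 s t))
      (hasDerivAt_deriv_slice_fst hβ₄smooth h2 s t)).congr_of_eventuallyEq (.of_forall hTt)
  have hcomm : deriv (fun x => deriv (T x ·) t) s = deriv (fun y => k₁ s y • N s y) t := by
    rw [deriv_deriv_comm_of_contDiff (hTsmooth.of_le h2), funext (hfr₁ s)]
  rw [hTts.deriv, deriv_fun_smul (hasDerivAt_slice_snd hk₁smooth h0 s t).differentiableAt
    (hasDerivAt_slice_snd hNsmooth h0 s t).differentiableAt] at hcomm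
  have hB₁_component := congrArg (mink · (B₂ s t)) hcomm
  rw [mink_frame_combination_B₂ (hTB₂ s t) (hNB₂ s t) (hB₁B₂ s t) (hB₂B₂ s t), mink_add_left_s6,
    mink_smul_left_s6, mink_smul_left_s6, hNB₂, ← hψ₂] at hB₁_component
  linear_combination hB₁_component

theorem pde_B1_component_partially_null
    (γ T N B₁ B₂ : ℝ → ℝ → (Fin 4 → ℝ))
    (k₁ k₂ β₁ β₂ β₃ β₄ : ℝ → ℝ → ℝ)
    (ψ₂ : ℝ → ℝ → ℝ)
    (hγsmooth : ContDiff ℝ (⊤ : ℕ∞) (fun p : ℝ × ℝ => γ p.1 p.2))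
    (hTsmooth : ContDiff ℝ (⊤ : ℕ∞) (fun p : ℝ × ℝ => T p.1 p.2))
    (hNsmooth : ContDiff ℝ (⊤ : ℕ∞) (fun p : ℝ × ℝ => N p.1 p.2))
    (hB₁smooth : ContDiff ℝ (⊤ : ℕ∞) (fun p : ℝ × ℝ => B₁ p.1 p.2))
    (hB₂smooth : ContDiff ℝ (⊤ : ℕ∞) (fun p : ℝ × ℝ => B₂ p.1 p.2))
    (hk₁smooth : ContDiff ℝ (⊤ : ℕ∞) (fun p : ℝ × ℝ => k₁ p.1 p.2))
    (hk₂smooth : ContDiff ℝ (⊤ : ℕ∞) (fun p : ℝ × ℝ => k₂ p.1 p.2))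
    (hβ₁smooth : ContDiff ℝ (⊤ : ℕ∞) (fun p : ℝ × ℝ => β₁ p.1 p.2))
    (hβ₂smooth : ContDiff ℝ (⊤ : ℕ∞) (fun p : ℝ × ℝ => β₂ p.1 p.2))
    (hβ₃smooth : ContDiff ℝ (⊤ : ℕ∞) (fun p : ℝ × ℝ => β₃ p.1 p.2))
    (hβ₄smooth : ContDiff ℝ (⊤ : ℕ∞) (fun p : ℝ × ℝ => β₄ p.1 p.2))
    (hTT : ∀ s t : ℝ, mink (T s t) (T s t) = 1)
    (hNN : ∀ s t : ℝ, mink (N s t) (N s t) = 1)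
    (hB₁B₁ : ∀ s t : ℝ, mink (B₁ s t) (B₁ s t) = 0)
    (hB₂B₂ : ∀ s t : ℝ, mink (B₂ s t) (B₂ s t) = 0)
    (hB₁B₂ : ∀ s t : ℝ, mink (B₁ s t) (B₂ s t) = 1)
    (hTN : ∀ s t : ℝ, mink (T s t) (N s t) = 0)
    (hTB₁ : ∀ s t : ℝ, mink (T s t) (B₁ s t) = 0)
    (hTB₂ : ∀ s t : ℝ, mink (T s t) (B₂ s t) = 0)
    (hNB₁ : ∀ s t : ℝ, mink (N s t) (B₁ s t) = 0)
    (hNB₂ : ∀ s t : ℝ, mink (N s t) (B₂ s t) = 0)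
    -- arclength parametrization and Frenet equations (k₃ = 0)
    (hT : ∀ s t : ℝ, T s t = deriv (fun x => γ x t) s)
    (hunit : ∀ s t : ℝ, mnorm (deriv (fun x => γ x t) s) = 1)
    (hfr₁ : ∀ s t : ℝ, deriv (fun x => T x t) s = k₁ s t • N s t)
    (hfr₂ : ∀ s t : ℝ, deriv (fun x => N x t) s = -(k₁ s t) • T s t + k₂ s t • B₁ s t)
    (hfr₃ : ∀ s t : ℝ, deriv (fun x => B₁ x t) s = 0)
    (hfr₄ : ∀ s t : ℝ, deriv (fun x => B₂ x t) s = -(k₂ s t) • N s t)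
    (hflow : ∀ s t : ℝ, deriv (fun x => γ s x) t =
      β₁ s t • T s t + β₂ s t • N s t + β₃ s t • B₁ s t + β₄ s t • B₂ s t)
    -- inextensibility: ∂β₁/∂s = β₂k₁
    (hinext : ∀ s t : ℝ, deriv (fun x => β₁ x t) s = β₂ s t * k₁ s t)
    (hψ₂ : ∀ s t : ℝ, ψ₂ s t = mink (deriv (fun x => N s x) t) (B₂ s t)) :
    ∀ s t : ℝ,
      deriv (fun x => deriv (fun y => β₃ y t) x) s + deriv (fun x => β₂ x t * k₂ x t) s +
      deriv (fun x => β₂ x t) s * k₂ s t + β₁ s t * k₁ s t * k₂ s t -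
      β₄ s t * (k₂ s t) ^ 2 - ψ₂ s t * k₁ s t = 0 :=
  pde_B1_component_partially_null_general γ T N B₁ B₂ k₁ k₂ β₁ β₂ β₃ β₄ ψ₂ hγsmooth hTsmooth
    hNsmooth hB₁smooth hB₂smooth hk₁smooth hk₂smooth hβ₁smooth hβ₂smooth hβ₃smooth hβ₄smooth hB₂B₂
    hB₁B₂ hTB₂ hNB₂ hT hfr₁ hfr₂ hfr₃ hfr₄ hflow hinext hψ₂
end
end
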